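/- arXiv:2104.08037 — 5 statements merged into one kernel-verified Lean document; each statement's English description precedes it below -/
import Mathlib

section
/- Let λ̂, μ̂₁, μ̂₂, λ̂₀, λ̂₁, λ̂₂ > 0 with λ̂ = λ̂₀+λ̂₁+λ̂₂ and ρ = λ̂/(μ̂₁+μ̂₂) < 1. With z = ρ⁻², the quadratic φ₋(η) = η²(μ̂₁ + (λ̂₀+λ̂₂)z) − η(λ̂+μ̂₁+μ̂₂) + μ̂₂z⁻¹ + λ̂₁ has the two roots η = ρ and η = ργ₂/(γ₁+λ̂₀), where γ₁ = μ̂₁ρ²+λ̂₂ and γ₂ = μ̂₂ρ²+λ̂₁. -/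
/-! At `z = ρ⁻²` the leading coefficient of `φ₋` is `(γ₁ + λ̂₀) / ρ²` and its constant term is
`γ₂`, so by Vieta's formulas it suffices that the claimed roots have product `ρ² γ₂ / (γ₁ + λ̂₀)`,
which is immediate, and sum `ρ² (λ̂ + μ̂₁ + μ̂₂) / (γ₁ + λ̂₀)`, which is the identity
`γ₁ + γ₂ + λ̂₀ = ρ (λ̂ + μ̂₁ + μ̂₂)`, a consequence of `ρ (μ̂₁ + μ̂₂) = λ̂`. -/

theorem quadratic_eq_zero_iff_eq_or_eq_of_vieta {K : Type*} [Field K] {a b c r s : K}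
    (ha : a ≠ 0) (hsum : a * (r + s) = b) (hprod : a * (r * s) = c) (x : K) :
    x ^ 2 * a - x * b + c = 0 ↔ x = r ∨ x = s := by
  have hfactor : x ^ 2 * a - x * b + c = a * ((x - r) * (x - s)) := by
    linear_combination x * hsum - hprod
  rw [hfactor, mul_eq_zero, mul_eq_zero, sub_eq_zero, sub_eq_zero, or_iff_right ha]

theorem gamma_sum_eq_rho_mul {lamh mu1h mu2h lam0h lam1h lam2h rho : ℝ}
    (hlam : lamh = lam0h + lam1h + lam2h) (hrho : rho * (mu1h + mu2h) = lamh) :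
    (mu1h * rho ^ 2 + lam2h) + (mu2h * rho ^ 2 + lam1h) + lam0h
      = rho * (lamh + mu1h + mu2h) := by
  linear_combination (rho - 1) * hrho - hlam

theorem phi_minus_roots_at_rho_inv_sq_general
    (lamh mu1h mu2h lam0h lam1h lam2h rho gam1 gam2 z : ℝ)
    (h0 : 0 < lam0h) (h1 : 0 < lam1h) (h2 : 0 < lam2h)
    (hm1 : 0 < mu1h) (hm2 : 0 < mu2h)
    (hlam : lamh = lam0h + lam1h + lam2h)
    (hrho : rho = lamh / (mu1h + mu2h))
    (hg1 : gam1 = mu1h * rho ^ 2 + lam2h)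
    (hg2 : gam2 = mu2h * rho ^ 2 + lam1h)
    (hz : z = rho⁻¹ ^ 2) :
    ∀ eta : ℝ,
      eta ^ 2 * (mu1h + (lam0h + lam2h) * z) - eta * (lamh + mu1h + mu2h)
          + mu2h * z⁻¹ + lam1h = 0 ↔
        eta = rho ∨ eta = rho * gam2 / (gam1 + lam0h) := by
  have hrho_pos : 0 < rho := by rw [hrho, hlam]; positivity
  have hrho_mul : rho * (mu1h + mu2h) = lamh := by rw [hrho]; field_simp
  have hden_pos : 0 < gam1 + lam0h := by rw [hg1]; positivity
  have hlead : mu1h + (lam0h + lam2h) * z = (gam1 + lam0h) / rho ^ 2 := by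
    rw [hz, hg1]; field_simp; ring
  have hconst : mu2h * z⁻¹ + lam1h = gam2 := by rw [hz, inv_pow, inv_inv, hg2]
  have hsum : gam1 + gam2 + lam0h = rho * (lamh + mu1h + mu2h) := by
    rw [hg1, hg2]; exact gamma_sum_eq_rho_mul hlam hrho_mul
  intro eta
  rw [add_assoc, hconst, hlead]
  refine quadratic_eq_zero_iff_eq_or_eq_of_vieta (by positivity) ?_ ?_ eta
  · field_simp
    linear_combination hsum
  · field_simp

theorem phi_minus_roots_at_rho_inv_sq
    (lamh mu1h mu2h lam0h lam1h lam2h rho gam1 gam2 z : ℝ)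
    (h0 : 0 < lam0h) (h1 : 0 < lam1h) (h2 : 0 < lam2h)
    (hm1 : 0 < mu1h) (hm2 : 0 < mu2h)
    (hlam : lamh = lam0h + lam1h + lam2h)
    (hrho : rho = lamh / (mu1h + mu2h)) (hrho1 : rho < 1)
    (hg1 : gam1 = mu1h * rho ^ 2 + lam2h)
    (hg2 : gam2 = mu2h * rho ^ 2 + lam1h)
    (hz : z = rho⁻¹ ^ 2) :
    ∀ eta : ℝ,
      eta ^ 2 * (mu1h + (lam0h + lam2h) * z) - eta * (lamh + mu1h + mu2h)
          + mu2h * z⁻¹ + lam1h = 0 ↔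
        eta = rho ∨ eta = rho * gam2 / (gam1 + lam0h) :=
  phi_minus_roots_at_rho_inv_sq_general lamh mu1h mu2h lam0h lam1h lam2h rho gam1 gam2 z h0 h1 h2
    hm1 hm2 hlam hrho hg1 hg2 hz
end

section
/- Let λ̂₀, λ̂₁, λ̂₂, μ̂₁, μ̂₂ > 0, λ̂ = λ̂₀+λ̂₁+λ̂₂, ρ = λ̂/(μ̂₁+μ̂₂), and suppose the variable z satisfies z > 0 and (ξ₁(z)+ξ₂(z))² z = 4, where ξ₁(z) = [2(μ̂₁ z⁻¹ + λ̂₂) + λ̂₀]/(λ̂+μ̂₁+μ̂₂) and ξ₂(z) = [2(μ̂₂ z⁻¹ + λ̂₁) + λ̂₀]/(λ̂+μ̂₁+μ̂₂). Then z = 1 or z = ρ⁻². -/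
/-!
Since `ξ₁ + ξ₂ = 2 (M z⁻¹ + L) / (L + M)` with `L = λ̂` and `M = μ̂₁ + μ̂₂`, clearing denominators
turns `(ξ₁ + ξ₂)² z = 4` into `(M + L z)² = (L + M)² z`, i.e. `(z - 1) (L² z - M²) = 0`, whose
roots are `1` and `M² / L² = ρ⁻²`.
-/

theorem sq_two_mul_inv_add_div_mul_eq_four_iff {L M z : ℝ} (hz : z ≠ 0) (hLM : L + M ≠ 0) :
    (2 * (M * z⁻¹ + L) / (L + M)) ^ 2 * z = 4 ↔ (z - 1) * (L ^ 2 * z - M ^ 2) = 0 := by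
  have hfactor : (M + L * z) ^ 2 - (L + M) ^ 2 * z = (z - 1) * (L ^ 2 * z - M ^ 2) := by ring
  rw [← hfactor, sub_eq_zero]
  field_simp
  exact ⟨fun h ↦ by linear_combination h / 4, fun h ↦ by linear_combination 4 * h⟩

theorem eq_one_or_eq_inv_div_sq_of_mul_eq_zero {L M z : ℝ} (hLM : L + M ≠ 0)
    (h : (z - 1) * (L ^ 2 * z - M ^ 2) = 0) : z = 1 ∨ z = (L / M)⁻¹ ^ 2 := by
  rcases mul_eq_zero.mp h with h | h
  · exact .inl (sub_eq_zero.mp h)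
  · by_cases hL : L = 0
    · have hM : M = 0 := by simpa [hL] using h
      exact absurd (by rw [hL, hM, add_zero]) hLM
    · right
      rw [inv_div, div_pow]
      field_simp
      linarith

theorem quadratic_roots_one_and_rho_inv_sq_general
    (lam0h lam1h lam2h mu1h mu2h lamh rho z : ℝ)
    (hlam : lamh = lam0h + lam1h + lam2h)
    (hrho : rho = lamh / (mu1h + mu2h))
    (heq : ((((2 * (mu1h * z⁻¹ + lam2h) + lam0h) / (lamh + mu1h + mu2h))
        + ((2 * (mu2h * z⁻¹ + lam1h) + lam0h) / (lamh + mu1h + mu2h))) ^ 2) * z = 4) :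
    z = 1 ∨ z = rho⁻¹ ^ 2 := by
  have hsum : ((2 * (mu1h * z⁻¹ + lam2h) + lam0h) / (lamh + mu1h + mu2h))
      + ((2 * (mu2h * z⁻¹ + lam1h) + lam0h) / (lamh + mu1h + mu2h))
      = 2 * ((mu1h + mu2h) * z⁻¹ + lamh) / (lamh + (mu1h + mu2h)) := by
    rw [hlam]; ring
  rw [hsum] at heq
  have hz : z ≠ 0 := by rintro rfl; norm_num at heq
  have hLM : lamh + (mu1h + mu2h) ≠ 0 := by intro h; rw [h, div_zero] at heq; norm_num at heq
  rw [hrho]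
  exact eq_one_or_eq_inv_div_sq_of_mul_eq_zero hLM
    ((sq_two_mul_inv_add_div_mul_eq_four_iff hz hLM).mp heq)

theorem quadratic_roots_one_and_rho_inv_sq
    (lam0h lam1h lam2h mu1h mu2h lamh rho z : ℝ)
    (h0 : 0 < lam0h) (h1 : 0 < lam1h) (h2 : 0 < lam2h)
    (hm1 : 0 < mu1h) (hm2 : 0 < mu2h)
    (hlam : lamh = lam0h + lam1h + lam2h)
    (hrho : rho = lamh / (mu1h + mu2h))
    (hz : 0 < z)
    (heq : ((((2 * (mu1h * z⁻¹ + lam2h) + lam0h) / (lamh + mu1h + mu2h))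
        + ((2 * (mu2h * z⁻¹ + lam1h) + lam0h) / (lamh + mu1h + mu2h))) ^ 2) * z = 4) :
    z = 1 ∨ z = rho⁻¹ ^ 2 :=
  quadratic_roots_one_and_rho_inv_sq_general lam0h lam1h lam2h mu1h mu2h lamh rho z hlam hrho heq
end

section
/- Let λ̂, μ̂ > 0, λ̂₊, λ̂₀ ≥ 0 with λ̂₀ > 0 and λ̂ = λ̂₀ + 2λ̂₊. Then the pair (γ, δ) = (λ̂/(2μ̂), (λ̂² + 4λ̂₊μ̂)/(λ̂² + 4(λ̂₀+λ̂₊)μ̂)) satisfies both equations: (i) λ̂+2μ̂ = [(λ̂₀+λ̂₊)/γ + μ̂γ]δ + (2/(λ̂+2μ̂))[(λ̂₀+λ̂₊)/γ + μ̂γ][λ̂/(2γ) + μ̂γ], and (ii) λ̂+2μ̂ = [λ̂₊/γ + μ̂γ]/δ + [(λ̂₀+λ̂₊)/γ + μ̂γ]δ. -/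
theorem symmetric_curves_intersection
    (lamh muh lamph lam0h gam delta : ℝ)
    (hlamh : 0 < lamh) (hmuh : 0 < muh)
    (hlamp : 0 ≤ lamph) (hlam0 : 0 < lam0h)
    (hlam : lamh = lam0h + 2 * lamph)
    (hgam : gam = lamh / (2 * muh))
    (hdelta : delta = (lamh ^ 2 + 4 * lamph * muh) / (lamh ^ 2 + 4 * (lam0h + lamph) * muh)) :
    (lamh + 2 * muh = ((lam0h + lamph) / gam + muh * gam) * delta
        + (2 / (lamh + 2 * muh)) * ((lam0h + lamph) / gam + muh * gam)
          * (lamh / (2 * gam) + muh * gam)) ∧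
      (lamh + 2 * muh = (lamph / gam + muh * gam) / delta
        + ((lam0h + lamph) / gam + muh * gam) * delta) := by
  have hnum : (0:ℝ) < lamh ^ 2 + 4 * lamph * muh := by positivity
  have hden : (0:ℝ) < lamh ^ 2 + 4 * (lam0h + lamph) * muh := by positivity
  have hsum : (0:ℝ) < lamh + 2 * muh := by positivity
  subst hgam hdelta hlam
  constructor <;>
  · field_simp
    ring
end

section
/- Let λ̂₀, λ̂₁, λ̂₂, μ̂₁, μ̂₂ > 0, λ̂ = λ̂₀+λ̂₁+λ̂₂, and ρ = λ̂/(μ̂₁+μ̂₂) with 0 < ρ. Then δ₊ = (λ̂₂ + ρ²μ̂₁)/(λ̂₀ + λ̂₁ + ρ²μ̂₂) satisfies the equation λ̂ + μ̂₁ + μ̂₂ = (λ̂₂/ρ + μ̂₁ρ)/δ₊ + ((λ̂₀+λ̂₁)/ρ + μ̂₂ρ)δ₊. -/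
/-!
Dividing numerator and denominator of `δ₊` by `ρ` gives `δ₊ = a / b` with
`a = λ̂₂/ρ + μ̂₁ρ` and `b = (λ̂₀+λ̂₁)/ρ + μ̂₂ρ`, and `δ = a / b` always solves
`a / δ + b δ = a + b`. Finally `a + b = λ̂/ρ + (μ̂₁+μ̂₂)ρ = (μ̂₁+μ̂₂) + λ̂` by the definition of `ρ`.
-/

theorem div_div_add_mul_div_eq_add {K : Type*} [Semifield K] {a b : K}
    (ha : a ≠ 0) (hb : b ≠ 0) : a / (a / b) + b * (a / b) = b + a := by
  rw [div_div_cancel₀ ha, mul_div_cancel₀ a hb]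

theorem asymmetric_delta_plus_solves
    (lam0h lam1h lam2h mu1h mu2h lamh rho deltap : ℝ)
    (h0 : 0 < lam0h) (h1 : 0 < lam1h) (h2 : 0 < lam2h)
    (hm1 : 0 < mu1h) (hm2 : 0 < mu2h)
    (hlam : lamh = lam0h + lam1h + lam2h)
    (hrho : rho = lamh / (mu1h + mu2h)) (hrho0 : 0 < rho)
    (hdelta : deltap = (lam2h + rho ^ 2 * mu1h) / (lam0h + lam1h + rho ^ 2 * mu2h)) :
    lamh + mu1h + mu2h = (lam2h / rho + mu1h * rho) / deltap
      + ((lam0h + lam1h) / rho + mu2h * rho) * deltap := by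
  have hdelta_ratio : deltap =
      (lam2h / rho + mu1h * rho) / ((lam0h + lam1h) / rho + mu2h * rho) := by
    rw [hdelta]
    field_simp
  have hrho_mu : rho * (mu1h + mu2h) = lamh := by
    rw [hrho]
    field_simp
  rw [hdelta_ratio, div_div_add_mul_div_eq_add (by positivity) (by positivity)]
  calc lamh + mu1h + mu2h = lamh / rho + (mu1h + mu2h) * rho := by
        rw [← hrho_mu]
        field_simp
        ring
    _ = (lam0h + lam1h) / rho + mu2h * rho + (lam2h / rho + mu1h * rho) := by
        rw [hlam]
        ring
end

section
/- Let a, b, λ̂₀, μ̂₁, μ̂₂ > 0 where a = M_j^{(r₁)}/M_i^{(r₁)} < 0 and b = M_j^{(h)}/M_i^{(h)} with M_i^{(r₁)} > 0 > M_i^{(h)} and M_i^{(r₁)}M_j^{(h)} − M_i^{(h)}M_j^{(r₁)} < 0. Then there exist k, l, w > 0 with kl > w²/4, 2kM_i^{(r₁)} + wM_j^{(r₁)} < 0 and 2kM_i^{(h)} + wM_j^{(h)} < 0. -/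
theorem lyapunov_coefficients_exist
    (Mir1 Mjr1 Mih Mjh : ℝ)
    (hi0 : 0 < Mir1) (hih : Mih < 0) (hj0 : Mjr1 < 0)
    (hdet : Mir1 * Mjh - Mih * Mjr1 < 0) :
    ∃ k l w : ℝ, 0 < k ∧ 0 < l ∧ 0 < w ∧ w ^ 2 / 4 < k * l ∧
      2 * k * Mir1 + w * Mjr1 < 0 ∧ 2 * k * Mih + w * Mjh < 0 := by
  rcases le_or_gt Mjh 0 with hjh | hjh
  · refine ⟨-Mjr1 / 2, (2 * Mir1) ^ 2 / (4 * (-Mjr1 / 2)) + 1, 2 * Mir1, by linarith, ?_, by linarith, ?_, by nlinarith, by nlinarith⟩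
    · have : 0 < -Mjr1 / 2 := by linarith
      positivity
    · have hk : (-Mjr1 / 2) ≠ 0 := by intro h; nlinarith
      have : (-Mjr1 / 2) * ((2 * Mir1) ^ 2 / (4 * (-Mjr1 / 2)) + 1)
          = (2 * Mir1) ^ 2 / 4 + (-Mjr1 / 2) := by
        have h1 : Mjr1 ≠ 0 := ne_of_lt hj0
        field_simp
        ring
      rw [this]; linarith
  · have hk : 0 < -Mjr1 * Mjh := by nlinarith
    have hw : 0 < Mir1 * Mjh + Mih * Mjr1 := by nlinarith
    refine ⟨-Mjr1 * Mjh, (Mir1 * Mjh + Mih * Mjr1) ^ 2 / (4 * (-Mjr1 * Mjh)) + 1,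
      Mir1 * Mjh + Mih * Mjr1, hk, ?_, hw, ?_, by nlinarith, by nlinarith⟩
    · positivity
    · have hk' : (-Mjr1 * Mjh) ≠ 0 := ne_of_gt hk
      have : (-Mjr1 * Mjh) * ((Mir1 * Mjh + Mih * Mjr1) ^ 2 / (4 * (-Mjr1 * Mjh)) + 1)
          = (Mir1 * Mjh + Mih * Mjr1) ^ 2 / 4 + (-Mjr1 * Mjh) := by
        have h1 : Mjr1 ≠ 0 := ne_of_lt hj0
        have h2 : Mjh ≠ 0 := ne_of_gt hjh
        field_simp
        ring
      rw [this]; linarith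
end
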